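/- arXiv:1607.08376 — 4 statements merged into one kernel-verified Lean document; each statement's English description precedes it below -/
import Mathlib

section
/- Let F(ξ) = Σ_{j=0}^N F_j ξ^j with F_j ∈ ℂ^{2M×2M}. F satisfies the QMF condition I − F(ξ)*F(ξ) = 0 on the unit circle if and only if for all ξ, η in the open unit disk, I − F(η)*F(ξ) = (1 − ξ η̄) ℓ_N(η)* ℓ_N(ξ), where ℓ_N(ξ) is the block-Hankel map ℓ_N(ξ) = H · (1, ξ, …, ξ^{N−1})^T with H the block matrix whose (i,j) block (1-indexed) is F_{i+j−1} if i+j−1 ≤ N and 0 otherwise. -/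
/-!
Put `G j = F j` for `j ≤ N` and `G j = 0` otherwise, and let `T i ξ = ∑ₖ ξ ^ k G (i + k)` be the
tail polynomials: `T 0 = F`, the blocks of `ℓ_N` are `T 1, …, T N`, and `T i = G i + ξ T (i + 1)`.
Expanding `T i η ^* T i ξ` with this recursion and telescoping over `i` gives, for all `ξ, η`,
`F(η)^* F(ξ) + (1 - ξ η̄) ℓ_N(η)^* ℓ_N(ξ) = c₀ + ∑_{m ≥ 1} (ξ ^ m c_m + η̄ ^ m c_m^*)`, where
`c_m = ∑ᵢ G i ^* G (i + m)`. At `η = ξ` on the unit circle the left side is `F(ξ)^* F(ξ)`, so the QMF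
condition says that a trigonometric polynomial is `I` on the circle: hence `c₀ = I`, `c_m = 0`, and
the right side is `I` for all `ξ, η`. Conversely, the identity makes the right side at `η = ξ`
equal to `I` on the open disk, hence by continuity on the circle.
-/

open Matrix Finset

/-- `F(ξ) = ∑_{j=0}^N F_j ξ^j`. -/
noncomputable def Fpoly (M N : ℕ) (F : ℕ → Matrix (Fin (2*M)) (Fin (2*M)) ℂ) (ξ : ℂ) :
    Matrix (Fin (2*M)) (Fin (2*M)) ℂ :=
  ∑ j ∈ Finset.range (N+1), ξ^j • F j

/-- The block-Hankel map `ℓ_N(ξ)`: its `i`-th block (0-indexed `i : Fin N`) is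
`∑_{k=0}^{N-1} ξ^k F_{i+k+1}` with `F_m := 0` for `m > N`. -/
noncomputable def ellN (M N : ℕ) (F : ℕ → Matrix (Fin (2*M)) (Fin (2*M)) ℂ) (ξ : ℂ) :
    Matrix (Fin N × Fin (2*M)) (Fin (2*M)) ℂ :=
  fun p c => ∑ k ∈ Finset.range N,
    ξ^k * (if p.1.1 + k + 1 ≤ N then F (p.1.1 + k + 1) p.2 c else 0)

open ComplexConjugate

theorem Complex.mul_conj_eq_one_of_norm_eq_one {ξ : ℂ} (hξ : ‖ξ‖ = 1) : ξ * conj ξ = 1 := by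
  rw [Complex.mul_conj', hξ]
  norm_num

theorem Complex.sphere_zero_one_infinite : (Metric.sphere (0 : ℂ) 1).Infinite :=
  (isPreconnected_sphere (by simp) 0 1).infinite_of_nontrivial
    ⟨1, by simp, -1, by simp, by norm_num⟩

open Polynomial in
theorem Complex.eq_zero_of_trigPoly_eq_zero_on_circle {N : ℕ} {a₀ : ℂ} {a b : ℕ → ℂ}
    (h : ∀ ξ : ℂ, ‖ξ‖ = 1 →
      a₀ + ∑ k ∈ range N, (ξ ^ (k + 1) * a k + conj ξ ^ (k + 1) * b k) = 0) :
    a₀ = 0 ∧ ∀ k < N, a k = 0 ∧ b k = 0 := by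
  -- on the circle `conj ξ = ξ⁻¹`, so `P` agrees there with `ξ ^ N` times the left-hand side of `h`
  set P : ℂ[X] := monomial N a₀ +
    ∑ k ∈ range N, (monomial (N + (k + 1)) (a k) + monomial (N - (k + 1)) (b k)) with hP
  have hroot : ∀ ξ : ℂ, ‖ξ‖ = 1 → P.eval ξ = 0 := by
    intro ξ hξ
    have hpow : ∀ k < N, ξ ^ (N - (k + 1)) = conj ξ ^ (k + 1) * ξ ^ N := by
      intro k hk
      obtain ⟨j, rfl⟩ : ∃ j, N = j + (k + 1) := ⟨N - (k + 1), by omega⟩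
      rw [Nat.add_sub_cancel, pow_add ξ j, mul_left_comm, ← mul_pow, mul_comm (conj ξ),
        Complex.mul_conj_eq_one_of_norm_eq_one hξ, one_pow, mul_one]
    calc P.eval ξ
        = ξ ^ N * (a₀ + ∑ k ∈ range N, (ξ ^ (k + 1) * a k + conj ξ ^ (k + 1) * b k)) := by
          simp only [hP, eval_add, eval_finsetSum, eval_monomial, mul_add, mul_sum]
          congr 1
          · ring
          refine sum_congr rfl fun k hk => ?_
          rw [hpow k (mem_range.1 hk), pow_add]
          ring
      _ = 0 := by rw [h ξ hξ, mul_zero]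
  have hcoeff : ∀ i, P.coeff i = 0 := by
    rw [P.eq_zero_of_infinite_isRoot <|
      Complex.sphere_zero_one_infinite.mono fun ξ hξ => hroot ξ (by simpa using hξ)]
    exact coeff_zero
  have hlt : ∀ x ∈ range N, ∀ k, N - (x + 1) ≠ N + k := fun x hx k => by
    have := mem_range.mp hx; omega
  have hlt0 : ∀ x ∈ range N, N - (x + 1) ≠ N := fun x hx => by simpa using hlt x hx 0
  have hgt : ∀ x k, N + (x + 1) ≠ N - k := by omega
  have hsub : ∀ x ∈ range N, ∀ k < N, N - (x + 1) = N - (k + 1) ↔ x = k := fun x hx k hk => by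
    have := mem_range.mp hx; omega
  refine ⟨?_, fun k hk => ⟨?_, ?_⟩⟩
  · simpa +contextual [hP, coeff_monomial, finsetSum_coeff, hlt0] using hcoeff N
  · simpa +contextual [hP, coeff_monomial, finsetSum_coeff, sum_add_distrib, hk, hlt] using
      hcoeff (N + (k + 1))
  · simpa +contextual [hP, coeff_monomial, finsetSum_coeff, sum_add_distrib, hk, hsub, hgt,
      if_neg (by omega : N ≠ N - (k + 1))] using hcoeff (N - (k + 1))

theorem Matrix.eq_zero_of_trigPoly_eq_zero_on_circle {m n : Type*} {N : ℕ} {A : Matrix m n ℂ}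
    {B C : ℕ → Matrix m n ℂ}
    (h : ∀ ξ : ℂ, ‖ξ‖ = 1 → A + ∑ k ∈ range N, (ξ ^ (k + 1) • B k + conj ξ ^ (k + 1) • C k) = 0) :
    A = 0 ∧ ∀ k < N, B k = 0 ∧ C k = 0 := by
  have hentry (r : m) (c : n) := Complex.eq_zero_of_trigPoly_eq_zero_on_circle (a₀ := A r c)
    (a := (B · r c)) (b := (C · r c)) fun ξ hξ => by
      simpa [Matrix.sum_apply] using congrFun (congrFun (h ξ hξ) r) c
  exact ⟨ext fun r c => (hentry r c).1,
    fun k hk => ⟨ext fun r c => ((hentry r c).2 k hk).1, ext fun r c => ((hentry r c).2 k hk).2⟩⟩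

theorem add_one_sub_smul_sum_eq_sum_add_smul {R V : Type*} [CommRing R] [AddCommGroup V]
    [Module R V] {f g : ℕ → V} {r : R}
    (hfg : ∀ i, f i = g i + r • f (i + 1)) (N : ℕ) :
    f 0 + (1 - r) • ∑ i ∈ range N, f (i + 1) = ∑ i ∈ range (N + 1), g i + r • f (N + 1) := by
  induction N with
  | zero => simp [hfg 0]
  | succ N ih =>
    rw [sum_range_succ, smul_add, ← add_assoc, ih, sum_range_succ _ (N + 1), hfg (N + 1)]
    module

section Autocorrelation

variable {n : Type*} (N : ℕ) (F : ℕ → Matrix n n ℂ)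

def truncCoeff (j : ℕ) : Matrix n n ℂ := if j ≤ N then F j else 0

def tailPoly (i : ℕ) (ξ : ℂ) : Matrix n n ℂ :=
  ∑ k ∈ range (N + 1), ξ ^ k • truncCoeff N F (i + k)

variable {N} in
theorem truncCoeff_of_lt {j : ℕ} (hj : N < j) : truncCoeff N F j = 0 := if_neg (by omega)

variable {N} in
theorem tailPoly_of_lt {i : ℕ} (hi : N < i) (ξ : ℂ) : tailPoly N F i ξ = 0 :=
  sum_eq_zero fun k _ => by rw [truncCoeff_of_lt F (by omega), smul_zero]

theorem tailPoly_eq_add_smul (i : ℕ) (ξ : ℂ) :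
    tailPoly N F i ξ = truncCoeff N F i + ξ • tailPoly N F (i + 1) ξ := by
  simp only [tailPoly, smul_sum, smul_smul, ← pow_succ']
  rw [sum_range_succ', sum_range_succ _ N, truncCoeff_of_lt F (by omega : N < i + 1 + N)]
  simp only [pow_zero, one_smul, add_zero, smul_zero, zero_add, add_comm, add_left_comm]

variable [Fintype n]

def autocorr (m : ℕ) : Matrix n n ℂ :=
  ∑ i ∈ range (N + 1), (truncCoeff N F i)ᴴ * truncCoeff N F (i + m)

def autocorrKernel (ξ η : ℂ) : Matrix n n ℂ :=
  autocorr N F 0 + ∑ k ∈ range (N + 1),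
    (ξ ^ (k + 1) • autocorr N F (k + 1) + conj η ^ (k + 1) • (autocorr N F (k + 1))ᴴ)

theorem sum_conjTranspose_truncCoeff_mul_tailPoly_succ (ξ : ℂ) :
    ∑ i ∈ range (N + 1), (truncCoeff N F i)ᴴ * tailPoly N F (i + 1) ξ =
      ∑ k ∈ range (N + 1), ξ ^ k • autocorr N F (k + 1) := by
  simp only [tailPoly, autocorr, mul_sum, mul_smul_comm, smul_sum]
  rw [sum_comm]
  simp only [add_assoc, add_comm 1]

theorem conjTranspose_tailPoly_mul_tailPoly (i : ℕ) (ξ η : ℂ) :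
    (tailPoly N F i η)ᴴ * tailPoly N F i ξ =
      ((truncCoeff N F i)ᴴ * truncCoeff N F i +
        ξ • ((truncCoeff N F i)ᴴ * tailPoly N F (i + 1) ξ) +
        conj η • ((truncCoeff N F i)ᴴ * tailPoly N F (i + 1) η)ᴴ) +
      (conj η * ξ) • ((tailPoly N F (i + 1) η)ᴴ * tailPoly N F (i + 1) ξ) := by
  rw [tailPoly_eq_add_smul N F i ξ, tailPoly_eq_add_smul N F i η]
  simp only [conjTranspose_add, conjTranspose_smul, conjTranspose_mul,
    conjTranspose_conjTranspose, add_mul, mul_add, smul_mul_assoc, mul_smul_comm,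
    Complex.star_def]
  module

theorem tailPoly_gram_eq_autocorrKernel (ξ η : ℂ) :
    (tailPoly N F 0 η)ᴴ * tailPoly N F 0 ξ + (1 - ξ * conj η) •
        ∑ i ∈ range N, (tailPoly N F (i + 1) η)ᴴ * tailPoly N F (i + 1) ξ =
      autocorrKernel N F ξ η := by
  have htel :=
    add_one_sub_smul_sum_eq_sum_add_smul (conjTranspose_tailPoly_mul_tailPoly N F · ξ η) N
  rw [tailPoly_of_lt F (Nat.lt_succ_self N), conjTranspose_zero, zero_mul, smul_zero, add_zero,
    sum_add_distrib, sum_add_distrib, ← smul_sum, ← smul_sum, ← conjTranspose_sum,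
    sum_conjTranspose_truncCoeff_mul_tailPoly_succ, sum_conjTranspose_truncCoeff_mul_tailPoly_succ,
    mul_comm (conj η)] at htel
  have hzero : ∑ i ∈ range (N + 1), (truncCoeff N F i)ᴴ * truncCoeff N F i = autocorr N F 0 := rfl
  rw [htel, hzero, autocorrKernel, add_assoc, sum_add_distrib]
  simp only [conjTranspose_sum, conjTranspose_smul, smul_sum, smul_smul, Complex.star_def, map_pow,
    ← pow_succ']

theorem continuous_autocorrKernel_diag : Continuous fun ξ => autocorrKernel N F ξ ξ := by
  unfold autocorrKernel
  fun_prop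

end Autocorrelation

section BlockHankel

variable (M N : ℕ) (F : ℕ → Matrix (Fin (2*M)) (Fin (2*M)) ℂ)

theorem Fpoly_eq_tailPoly_zero (ξ : ℂ) : Fpoly M N F ξ = tailPoly N F 0 ξ :=
  sum_congr rfl fun j hj => by
    rw [zero_add, truncCoeff, if_pos (Nat.lt_succ_iff.mp (mem_range.mp hj))]

theorem ellN_apply (i : Fin N) (r c : Fin (2*M)) (ξ : ℂ) :
    ellN M N F ξ (i, r) c = tailPoly N F (i + 1) ξ r c := by
  rw [tailPoly, Matrix.sum_apply, sum_range_succ, truncCoeff_of_lt F (by omega)]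
  simp only [ellN, Matrix.smul_apply, mul_zero, Matrix.zero_apply, add_zero, truncCoeff,
    smul_eq_mul, apply_ite (fun A : Matrix _ _ ℂ => A r c), add_right_comm]

theorem conjTranspose_ellN_mul_ellN (ξ η : ℂ) :
    (ellN M N F η)ᴴ * ellN M N F ξ =
      ∑ i ∈ range N, (tailPoly N F (i + 1) η)ᴴ * tailPoly N F (i + 1) ξ := by
  ext b c
  simp only [mul_apply, Fintype.sum_prod_type, conjTranspose_apply, ellN_apply, Matrix.sum_apply]
  exact Fin.sum_univ_eq_sum_range (fun i => ∑ r, star (tailPoly N F (i + 1) η r b) *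
    tailPoly N F (i + 1) ξ r c) N

theorem Fpoly_gram_eq_autocorrKernel (ξ η : ℂ) :
    (Fpoly M N F η)ᴴ * Fpoly M N F ξ + (1 - ξ * conj η) • ((ellN M N F η)ᴴ * ellN M N F ξ) =
      autocorrKernel N F ξ η := by
  rw [Fpoly_eq_tailPoly_zero, Fpoly_eq_tailPoly_zero, conjTranspose_ellN_mul_ellN]
  exact tailPoly_gram_eq_autocorrKernel N F ξ η

theorem autocorrKernel_eq_one_of_qmf
    (h : ∀ ξ : ℂ, ‖ξ‖ = 1 → (1 : Matrix (Fin (2*M)) (Fin (2*M)) ℂ) -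
      (Fpoly M N F ξ)ᴴ * Fpoly M N F ξ = 0) (ξ η : ℂ) :
    autocorrKernel N F ξ η = 1 := by
  obtain ⟨h0, hk⟩ := Matrix.eq_zero_of_trigPoly_eq_zero_on_circle (N := N + 1)
    (A := autocorr N F 0 - 1) (B := fun k => autocorr N F (k + 1))
    (C := fun k => (autocorr N F (k + 1))ᴴ) fun ζ hζ => by
      have hgram := Fpoly_gram_eq_autocorrKernel M N F ζ ζ
      rw [Complex.mul_conj_eq_one_of_norm_eq_one hζ, sub_self, zero_smul, add_zero,
        ← sub_eq_zero.mp (h ζ hζ), autocorrKernel] at hgram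
      rw [sub_add_eq_add_sub, ← hgram, sub_self]
  rw [autocorrKernel, sub_eq_zero.mp h0]
  refine add_eq_left.mpr (sum_eq_zero fun k hk' => ?_)
  rw [(hk k (mem_range.mp hk')).1, conjTranspose_zero, smul_zero, smul_zero, add_zero]

theorem one_sub_Fpoly_gram_eq_of_qmf
    (h : ∀ ξ : ℂ, ‖ξ‖ = 1 → (1 : Matrix (Fin (2*M)) (Fin (2*M)) ℂ) -
      (Fpoly M N F ξ)ᴴ * Fpoly M N F ξ = 0) (ξ η : ℂ) :
    1 - (Fpoly M N F η)ᴴ * Fpoly M N F ξ =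
      (1 - ξ * conj η) • ((ellN M N F η)ᴴ * ellN M N F ξ) := by
  rw [← autocorrKernel_eq_one_of_qmf M N F h ξ η, ← Fpoly_gram_eq_autocorrKernel,
    add_sub_cancel_left]

theorem qmf_of_one_sub_Fpoly_gram_eq
    (h : ∀ ξ η : ℂ, ‖ξ‖ < 1 → ‖η‖ < 1 →
      (1 : Matrix (Fin (2*M)) (Fin (2*M)) ℂ) - (Fpoly M N F η)ᴴ * Fpoly M N F ξ =
        (1 - ξ * conj η) • ((ellN M N F η)ᴴ * ellN M N F ξ))
    (ξ : ℂ) (hξ : ‖ξ‖ = 1) :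
    1 - (Fpoly M N F ξ)ᴴ * Fpoly M N F ξ = 0 := by
  have hball : Set.EqOn (fun ζ => autocorrKernel N F ζ ζ) 1 (Metric.ball 0 1) := fun ζ hζ => by
    have hζ : ‖ζ‖ < 1 := by simpa using hζ
    change autocorrKernel N F ζ ζ = 1
    rw [← Fpoly_gram_eq_autocorrKernel M, ← h ζ ζ hζ hζ, add_sub_cancel]
  have hsphere := hball.closure (continuous_autocorrKernel_diag N F) continuous_const
    (by rw [closure_ball 0 one_ne_zero]; simpa using hξ.le)
  have hgram := Fpoly_gram_eq_autocorrKernel M N F ξ ξ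
  rw [Complex.mul_conj_eq_one_of_norm_eq_one hξ, sub_self, zero_smul, add_zero] at hgram
  rw [hgram, sub_eq_zero]
  exact hsphere.symm

end BlockHankel

theorem stmt1 (M N : ℕ) (F : ℕ → Matrix (Fin (2*M)) (Fin (2*M)) ℂ) :
    (∀ ξ : ℂ, ‖ξ‖ = 1 →
      (1 : Matrix (Fin (2*M)) (Fin (2*M)) ℂ) - (Fpoly M N F ξ)ᴴ * Fpoly M N F ξ = 0) ↔
    (∀ ξ η : ℂ, ‖ξ‖ < 1 → ‖η‖ < 1 →
      (1 : Matrix (Fin (2*M)) (Fin (2*M)) ℂ) - (Fpoly M N F η)ᴴ * Fpoly M N F ξ =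
        (1 - ξ * (starRingEnd ℂ) η) • ((ellN M N F η)ᴴ * ellN M N F ξ)) :=
  ⟨fun h ξ η _ _ => one_sub_Fpoly_gram_eq_of_qmf M N F h ξ η, qmf_of_one_sub_Fpoly_gram_eq M N F⟩
end

section
/- Let F_j ∈ ℂ^{2M×2M}, j = 0,…,N, be such that F(ξ) = Σ F_j ξ^j satisfies the QMF condition on the unit circle. Then the block matrix U = (F_0* + F_N*) P^0 + Σ_{j=1}^{N−1} F_{N−j}* P^j, where P is the block cyclic shift on (ℂ^{2M})^N, is unitary. Equivalently, the block-circulant matrix U with first block row (F_0*+F_N*, F_1*, …, F_{N−1}*) satisfies U*U = I. -/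
open Matrix Finset

/-- The block-circulant matrix `U` whose block in position `(i,j)` is `G_{(j-i) mod N}`,
where `G_0 = F_0* + F_N*` and `G_k = F_k*` for `1 ≤ k ≤ N-1`; equivalently
`U = (F_0*+F_N*) P^0 + ∑_{j=1}^{N-1} F_{N-j}* P^j` with `P` the block cyclic shift. -/
noncomputable def Ucirc (M N : ℕ) (F : ℕ → Matrix (Fin (2*M)) (Fin (2*M)) ℂ) :
    Matrix (Fin N × Fin (2*M)) (Fin N × Fin (2*M)) ℂ :=
  fun p q =>
    (if (q.1.1 + N - p.1.1) % N = 0 then (F 0 + F N)ᴴ else (F ((q.1.1 + N - p.1.1) % N))ᴴ)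
      p.2 q.2

/-!
Fold the coefficients of `F` modulo `N`: `H k = ∑_{j ≡ k} F j`, so `H 0 = F 0 + F N` and
`H k = F k` otherwise, and `U` is the block-circulant matrix `(circulant H)ᴴ`. At an `N`-th root of
unity `ζ`, `F(ζ)` is the discrete Fourier transform of `H`, so the QMF condition says that
`𝓕 H k` is an isometry for every `k`. Since the Fourier transform of the autocorrelation
`d ↦ ∑ₛ H sᴴ H (s + d)` is `(𝓕 H k)ᴴ 𝓕 H k = 1`, Fourier inversion makes the autocorrelation the
delta at `0`. But the autocorrelation is exactly the symbol of `U Uᴴ`, hence `U Uᴴ = 1`, and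
`Uᴴ U = 1` follows in finite dimension.
-/

def autocorrelation {ι A : Type*} [Fintype ι] [Add ι] [Mul A] [AddCommMonoid A] [Star A]
    (H : ι → A) (d : ι) : A :=
  ∑ s, star (H s) * H (s + d)

theorem Matrix.conjTranspose_circulant_mul_circulant {ι A : Type*} [Fintype ι] [AddGroup ι]
    [NonUnitalNonAssocSemiring A] [StarRing A] (H : ι → A) :
    (circulant H)ᴴ * circulant H = circulant (autocorrelation H) := by
  rw [conjTranspose_circulant, circulant_mul]
  congr 1
  funext d
  exact Fintype.sum_equiv (Equiv.subRight d) _ _ fun j => by simp [circulant_apply]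

namespace ZMod

variable {N : ℕ} [NeZero N] {A : Type*} [Ring A] [StarRing A] [Algebra ℂ A] [StarModule ℂ A]

theorem dft_autocorrelation (H : ZMod N → A) (k : ZMod N) :
    𝓕 (autocorrelation H) k = star (𝓕 H k) * 𝓕 H k := by
  rw [dft_apply, dft_apply, star_sum, sum_mul_sum]
  simp only [autocorrelation, smul_sum]
  refine sum_comm.trans <| sum_congr rfl fun s _ =>
    Fintype.sum_equiv (Equiv.addLeft s) _ _ fun d => ?_
  rw [Equiv.coe_addLeft, star_smul, smul_mul_smul_comm, Complex.star_def,
    ← AddChar.map_neg_eq_conj, ← AddChar.map_add_eq_mul]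
  congr 2
  ring

theorem autocorrelation_eq_single_of_dft {H : ZMod N → A}
    (hH : ∀ k, star (𝓕 H k) * 𝓕 H k = 1) : autocorrelation H = Pi.single 0 1 := by
  apply dft.injective
  funext k
  rw [dft_autocorrelation, hH, dft_apply, Fintype.sum_eq_single 0 fun j hj => by simp [hj]]
  simp

end ZMod

def foldCoeff {R : Type*} [AddCommMonoid R] (N : ℕ) (F : ℕ → R) (k : ZMod N) : R :=
  ∑ j ∈ (range (N + 1)).filter (fun j : ℕ => (j : ZMod N) = k), F j

theorem foldCoeff_eq_ite {R : Type*} [AddCommMonoid R] {N : ℕ} [NeZero N] (F : ℕ → R)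
    (k : ZMod N) : foldCoeff N F k = if k.val = 0 then F 0 + F N else F k.val := by
  split_ifs with hk
  · rw [ZMod.val_eq_zero] at hk
    subst hk
    have : (range (N + 1)).filter (fun j : ℕ => (j : ZMod N) = 0) = {0, N} := by
      ext j
      simp only [mem_filter, mem_range, mem_insert, mem_singleton, ZMod.natCast_eq_zero_iff]
      constructor
      · rintro ⟨hj, c, rfl⟩
        rcases Nat.lt_or_ge c 1 with hc | hc <;> [left; right] <;> nlinarith
      · rintro (rfl | rfl) <;> simp
    rw [foldCoeff, this, sum_pair (NeZero.ne N).symm]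
  · have : (range (N + 1)).filter (fun j : ℕ => (j : ZMod N) = k) = {k.val} := by
      ext j
      simp only [mem_filter, mem_range, mem_singleton]
      constructor
      · rintro ⟨hj, rfl⟩
        rw [ZMod.val_natCast] at hk ⊢
        have : j ≠ N := by rintro rfl; simp at hk
        exact (Nat.mod_eq_of_lt (by omega)).symm
      · rintro rfl
        exact ⟨by have := ZMod.val_lt k; omega, ZMod.natCast_zmod_val k⟩
    rw [foldCoeff, this, sum_singleton]

open ZMod in
theorem Fpoly_stdAddChar_neg (M N : ℕ) [NeZero N] (F : ℕ → Matrix (Fin (2*M)) (Fin (2*M)) ℂ)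
    (k : ZMod N) : Fpoly M N F (stdAddChar (-k)) = 𝓕 (foldCoeff N F) k := by
  simp only [Fpoly, dft_apply, foldCoeff, smul_sum]
  rw [← sum_fiberwise (range (N + 1)) (fun j : ℕ => (j : ZMod N))]
  refine sum_congr rfl fun t _ => sum_congr rfl fun j hj => ?_
  rw [← AddChar.map_nsmul_eq_pow, (mem_filter.1 hj).2.symm, nsmul_eq_mul, mul_neg]

theorem Ucirc_eq_comp_conjTranspose_circulant (M n : ℕ) (F : ℕ → Matrix (Fin (2*M)) (Fin (2*M)) ℂ) :
    Ucirc M (n + 1) F = comp _ _ _ _ ℂ (circulant (foldCoeff (n + 1) F))ᴴ := by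
  ext ⟨p, i⟩ ⟨q, j⟩
  -- `k` will be `q - p`, computed in `ZMod (n + 1)`, which is `Fin (n + 1)` by definition
  have key : ∀ k : ZMod (n + 1), k.val = (q.1 + (n + 1) - p.1) % (n + 1) →
      Ucirc M (n + 1) F (p, i) (q, j) = (foldCoeff (n + 1) F k)ᴴ i j := by
    intro k hk
    rw [foldCoeff_eq_ite, hk, apply_ite conjTranspose]
    rfl
  exact key _ ((Fin.val_sub q p).trans (by congr 1; omega))

theorem stmt3 (M N : ℕ) (F : ℕ → Matrix (Fin (2*M)) (Fin (2*M)) ℂ)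
    (hQMF : ∀ ξ : ℂ, ‖ξ‖ = 1 →
      (1 : Matrix (Fin (2*M)) (Fin (2*M)) ℂ) - (Fpoly M N F ξ)ᴴ * Fpoly M N F ξ = 0) :
    (Ucirc M N F)ᴴ * Ucirc M N F = 1 ∧ Ucirc M N F * (Ucirc M N F)ᴴ = 1 := by
  obtain _ | n := N
  · exact ⟨Subsingleton.elim _ _, Subsingleton.elim _ _⟩
  have hH : autocorrelation (foldCoeff (n + 1) F) = Pi.single 0 1 :=
    ZMod.autocorrelation_eq_single_of_dft fun k => by
      rw [star_eq_conjTranspose, ← Fpoly_stdAddChar_neg]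
      exact (sub_eq_zero.1 (hQMF _ (AddChar.norm_apply _ _))).symm
  have hU : Ucirc M (n + 1) F * (Ucirc M (n + 1) F)ᴴ = 1 := by
    set C := circulant (foldCoeff (n + 1) F)
    have hC : Cᴴ * C = 1 := by
      rw [conjTranspose_circulant_mul_circulant, hH, circulant_single_one]
    rw [Ucirc_eq_comp_conjTranspose_circulant]
    -- `(comp X)ᴴ = comp Xᴴ` holds by definition
    change compRingEquiv _ _ ℂ Cᴴ * compRingEquiv _ _ ℂ Cᴴᴴ = 1
    rw [conjTranspose_conjTranspose, ← map_mul, hC, map_one]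
  exact ⟨mul_eq_one_comm.1 hU, hU⟩
end

section
/- If F(ξ) = Σ_{j=0}^N F_j ξ^j, F_j ∈ ℂ^{2M×2M}, satisfies the QMF condition on the unit circle, then the blocks B and D from the ABCD construction satisfy B D^N = 0. -/
open Matrix Finset

/-- The `(N+1) × (N+1)` block matrix `T` with first block column `(F_0,…,F_N)ᵀ` whose
remaining block columns form a block circulant with first block row `(F_N,…,F_1)`;
equivalently, the block circulant with block `(i,j)` equal to `F_{(i-j) mod (N+1)}`. -/
noncomputable def Tcirc (M N : ℕ) (F : ℕ → Matrix (Fin (2*M)) (Fin (2*M)) ℂ) :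
    Matrix (Fin (N+1) × Fin (2*M)) (Fin (N+1) × Fin (2*M)) ℂ :=
  fun p q => F ((p.1.1 + (N+1) - q.1.1) % (N+1)) p.2 q.2

/-- The block diagonal matrix `diag(I, U)` where `U` is the block circulant with first
block row `(F_0*+F_N*, F_1*, …, F_{N-1}*)`. -/
noncomputable def Ediag (M N : ℕ) (F : ℕ → Matrix (Fin (2*M)) (Fin (2*M)) ℂ) :
    Matrix (Fin (N+1) × Fin (2*M)) (Fin (N+1) × Fin (2*M)) ℂ :=
  fun p q =>
    if p.1.1 = 0 then (if q.1.1 = 0 ∧ p.2 = q.2 then 1 else 0)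
    else if q.1.1 = 0 then 0
    else
      (if (q.1.1 + N - p.1.1) % N = 0 then (F 0 + F N)ᴴ
       else (F ((q.1.1 + N - p.1.1) % N))ᴴ) p.2 q.2

/-- The matrix `(A B; C D) = T · diag(I, U)` of the Definition. -/
noncomputable def ABCDmat (M N : ℕ) (F : ℕ → Matrix (Fin (2*M)) (Fin (2*M)) ℂ) :
    Matrix (Fin (N+1) × Fin (2*M)) (Fin (N+1) × Fin (2*M)) ℂ :=
  Tcirc M N F * Ediag M N F

/-- The block `A ∈ ℂ^{2M×2M}` of `(A B; C D)`. -/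
noncomputable def Amat (M N : ℕ) (F : ℕ → Matrix (Fin (2*M)) (Fin (2*M)) ℂ) :
    Matrix (Fin (2*M)) (Fin (2*M)) ℂ :=
  fun r s => ABCDmat M N F ((0 : Fin (N+1)), r) ((0 : Fin (N+1)), s)

/-- The block `B ∈ ℂ^{2M×2MN}` of `(A B; C D)`. -/
noncomputable def Bmat (M N : ℕ) (F : ℕ → Matrix (Fin (2*M)) (Fin (2*M)) ℂ) :
    Matrix (Fin (2*M)) (Fin N × Fin (2*M)) ℂ :=
  fun r q => ABCDmat M N F ((0 : Fin (N+1)), r) (q.1.succ, q.2)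

/-- The block `C ∈ ℂ^{2MN×2M}` of `(A B; C D)`. -/
noncomputable def Cmat (M N : ℕ) (F : ℕ → Matrix (Fin (2*M)) (Fin (2*M)) ℂ) :
    Matrix (Fin N × Fin (2*M)) (Fin (2*M)) ℂ :=
  fun p s => ABCDmat M N F (p.1.succ, p.2) ((0 : Fin (N+1)), s)

/-- The block `D ∈ ℂ^{2MN×2MN}` of `(A B; C D)`. -/
noncomputable def Dmat (M N : ℕ) (F : ℕ → Matrix (Fin (2*M)) (Fin (2*M)) ℂ) :
    Matrix (Fin N × Fin (2*M)) (Fin N × Fin (2*M)) ℂ :=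
  fun p q => ABCDmat M N F (p.1.succ, p.2) (q.1.succ, q.2)

/-!
Extend the coefficients by zero to `ℤ`. Comparing Laurent coefficients in `F(ξ)ᴴ F(ξ) = 1` and
`F(ξ) F(ξ)ᴴ = 1` on the unit circle gives the correlation identities
`∑ₖ Fₖᴴ F_{k+d} = δ_d` and `∑ₖ Fₖ F_{k+d}ᴴ = δ_d`.

Write `D = T' U`, where `T'` is the lower-right `N × N` block corner of `T̃`, and `B = V₀ U`,
where `Vₛ = (F_{N+s-k})ₖ`. With the tail rows `Rₛ = (∑_{m ≥ s} Fₘ F_{m+q+1-s}ᴴ)_q`, each of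
`Vₛ U = R_{s+1}` and `Rₛ T' = Vₛ` (for `s ≥ 1`) is a finite window of a correlation identity in
which all omitted terms vanish for support reasons. Hence `B Dᵗ = R_{t+1}`, and `R_{N+1} = 0`
because `Fₘ = 0` for `m > N`.
-/

theorem sum_range_eq_sum_Ico_int {M : Type*} [AddCommMonoid M] (f : ℤ → M) (n : ℕ) :
    ∑ k ∈ range n, f k = ∑ k ∈ Ico (0 : ℤ) n, f k := by
  rw [Int.Ico_eq_finset_map, sum_map]
  simp

theorem sum_fin_eq_sum_Ico_int {M : Type*} [AddCommMonoid M] (f : ℤ → M) (n : ℕ) :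
    ∑ k : Fin n, f k = ∑ k ∈ Ico (0 : ℤ) n, f k := by
  rw [Fin.sum_univ_eq_sum_range (fun k => f k), sum_range_eq_sum_Ico_int]

theorem sum_Ico_sub_eq_sum_Icc {M : Type*} [AddCommMonoid M] (f : ℤ → M) (c n : ℤ) :
    ∑ k ∈ Ico 0 n, f (c - k) = ∑ m ∈ Icc (c - n + 1) c, f m :=
  sum_nbij' (c - ·) (c - ·) (by intro k; simp only [mem_Ico, mem_Icc]; omega)
    (by intro m; simp only [mem_Ico, mem_Icc]; omega) (by simp) (by simp) (by simp)

/-- The coefficient-wise QMF condition on a sequence supported in `[0, N]`, together with its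
equivalent UEP form. -/
structure IsQMF {A : Type*} [Ring A] [StarRing A] (N : ℕ) (G : ℤ → A) : Prop where
  eq_zero_of_neg : ∀ k < 0, G k = 0
  eq_zero_of_gt : ∀ k, (N : ℤ) < k → G k = 0
  finsum_star_mul : ∀ d, ∑ᶠ k, star (G k) * G (k + d) = if d = 0 then 1 else 0
  finsum_mul_star : ∀ d, ∑ᶠ k, G k * star (G (k + d)) = if d = 0 then 1 else 0

namespace IsQMF

variable {A : Type*} [Ring A] [StarRing A] {N : ℕ} {G : ℤ → A}

theorem sum_star_mul (hG : IsQMF N G) {S : Finset ℤ} {a b : ℤ}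
    (hS : ∀ k ∉ S, star (G (k + a)) * G (k + b) = 0) :
    ∑ k ∈ S, star (G (k + a)) * G (k + b) = if a = b then 1 else 0 := by
  rw [← finsum_eq_sum_of_support_subset _ (Function.support_subset_iff'.2 hS),
    ← finsum_comp_equiv (Equiv.addRight (-a))]
  simp only [Equiv.coe_addRight, neg_add_cancel_right]
  rw [show (fun k => star (G k) * G (k + -a + b)) = fun k => star (G k) * G (k + (b - a)) by
    ext; ring_nf, hG.finsum_star_mul]
  simp only [sub_eq_zero, eq_comm]

theorem sum_mul_star (hG : IsQMF N G) {S : Finset ℤ} {d : ℤ}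
    (hS : ∀ k ∉ S, G k * star (G (k + d)) = 0) :
    ∑ k ∈ S, G k * star (G (k + d)) = if d = 0 then 1 else 0 := by
  rw [← finsum_eq_sum_of_support_subset _ (Function.support_subset_iff'.2 hS),
    hG.finsum_mul_star]

theorem sum_Ico_star_mul (hG : IsQMF N G) {lo hi a b : ℤ} (hlo : lo + a ≤ 0 ∨ lo + b ≤ 0)
    (hhi : N < hi + a ∨ N < hi + b) :
    ∑ k ∈ Ico lo hi, star (G (k + a)) * G (k + b) = if a = b then 1 else 0 := by
  refine hG.sum_star_mul fun k hk => ?_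
  rw [mem_Ico, not_and_or, not_le, not_lt] at hk
  rcases hk with hk | hk
  · rcases hlo with h | h
    · rw [hG.eq_zero_of_neg (k + a) (by omega), star_zero, zero_mul]
    · rw [hG.eq_zero_of_neg (k + b) (by omega), mul_zero]
  · rcases hhi with h | h
    · rw [hG.eq_zero_of_gt (k + a) (by omega), star_zero, zero_mul]
    · rw [hG.eq_zero_of_gt (k + b) (by omega), mul_zero]

theorem sum_Icc_mul_star (hG : IsQMF N G) {lo hi d : ℤ} (hlo : lo ≤ 0 ∨ lo + d ≤ 0)
    (hhi : N ≤ hi ∨ N ≤ hi + d) :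
    ∑ k ∈ Icc lo hi, G k * star (G (k + d)) = if d = 0 then 1 else 0 := by
  refine hG.sum_mul_star fun k hk => ?_
  rw [mem_Icc, not_and_or, not_le, not_le] at hk
  rcases hk with hk | hk
  · rcases hlo with h | h
    · rw [hG.eq_zero_of_neg k (by omega), zero_mul]
    · rw [hG.eq_zero_of_neg (k + d) (by omega), star_zero, mul_zero]
  · rcases hhi with h | h
    · rw [hG.eq_zero_of_gt k (by omega), zero_mul]
    · rw [hG.eq_zero_of_gt (k + d) (by omega), star_zero, mul_zero]

end IsQMF

section CirculantBlocks

variable {A : Type*} [Ring A] [StarRing A] (N : ℕ) (G : ℤ → A)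

-- The block circulant `U` and the lower-right `N × N` block corner of `T̃`, with block indices
-- shifted down by one; the second summand is the wrap-around of the circulant.
def circBlockU : Matrix (Fin N) (Fin N) A := of fun k q => star (G (q - k) + G (q - k + N))

def circBlockT : Matrix (Fin N) (Fin N) A := of fun p k => G (p - k) + G (p - k + N + 1)

def coeffRow (s : ℕ) : Fin N → A := fun k => G (N + s - k)

-- `tailRow N G (t + 1)` is the block row `B Dᵗ`.
noncomputable def tailRow (s : ℕ) : Fin N → A :=
  fun q => ∑ m ∈ Icc (s : ℤ) N, G m * star (G (m + (q + 1 - s)))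

variable {N G}

theorem vecMul_coeffRow_circBlockU (hG : IsQMF N G) (s : ℕ) :
    vecMul (coeffRow N G s) (circBlockU N G) = tailRow N G (s + 1) := by
  funext q
  have hq : (q : ℤ) < N := by exact_mod_cast q.isLt
  let f : ℤ → A := fun m => G m * star (G (m + (q - N - s))) + G m * star (G (m + (q - s)))
  calc vecMul (coeffRow N G s) (circBlockU N G) q
      = ∑ k ∈ Ico (0 : ℤ) N, f (N + s - k) := by
        rw [vecMul, dotProduct, ← sum_fin_eq_sum_Ico_int (fun k => f (N + s - k))]
        refine sum_congr rfl fun k _ => ?_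
        simp only [coeffRow, circBlockU, of_apply, f, star_add, mul_add]
        ring_nf
    _ = ∑ m ∈ Icc (s + 1 : ℤ) (N + s), G m * star (G (m + (q - s))) := by
        rw [sum_Ico_sub_eq_sum_Icc, add_sub_cancel_left, sum_add_distrib,
          hG.sum_Icc_mul_star (by omega) (by omega), if_neg (by omega), zero_add]
    _ = ∑ m ∈ Icc ((s + 1 : ℕ) : ℤ) N, G m * star (G (m + (q - s))) := by
        push_cast
        refine (sum_subset (fun m => by simp only [mem_Icc]; omega) fun m hm hm' => ?_).symm
        simp only [mem_Icc] at hm hm'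
        rw [hG.eq_zero_of_gt m (by omega), zero_mul]
    _ = tailRow N G (s + 1) q := sum_congr rfl fun m _ => by push_cast; ring_nf

theorem vecMul_tailRow_circBlockT (hG : IsQMF N G) {s : ℕ} (hs : 1 ≤ s) :
    vecMul (tailRow N G s) (circBlockT N G) = coeffRow N G s := by
  funext k
  have hk : (k : ℤ) < N := by exact_mod_cast k.isLt
  let h : ℤ → A := fun p => ∑ m ∈ Icc (s : ℤ) N, G m * star (G (p + (m + 1 - s)))
  have h_neg : ∀ p < 0, h p = 0 := fun p hp => by
    calc h p = ∑ m ∈ Icc (s : ℤ) N, G m * star (G (m + (p + 1 - s))) :=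
          sum_congr rfl fun m _ => by ring_nf
      _ = 0 := by rw [hG.sum_Icc_mul_star (by omega) (by omega), if_neg (by omega)]
  have h_first : ∑ p ∈ Ico (0 : ℤ) N, h p * G (p + -k) = 0 := by
    simp only [h, sum_mul, mul_assoc]
    rw [sum_comm]
    refine sum_eq_zero fun m hm => ?_
    rw [mem_Icc] at hm
    rw [← mul_sum, hG.sum_Ico_star_mul (by omega) (by omega), if_neg (by omega), mul_zero]
  calc vecMul (tailRow N G s) (circBlockT N G) k
      = ∑ p ∈ Ico (0 : ℤ) N, (h p * G (p + -k) + h p * G (p + (N + 1 - k))) := by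
        rw [vecMul, dotProduct, ← sum_fin_eq_sum_Ico_int
          (fun p => h p * G (p + -k) + h p * G (p + (N + 1 - k)))]
        refine sum_congr rfl fun p _ => ?_
        rw [show tailRow N G s p = h p from sum_congr rfl fun m _ => by ring_nf]
        simp only [circBlockT, of_apply, mul_add]
        congr 3; ring
    _ = ∑ p ∈ Ico (-(N + 1 : ℤ)) N, h p * G (p + (N + 1 - k)) := by
        rw [sum_add_distrib, h_first, zero_add]
        refine sum_subset (fun p => by simp only [mem_Ico]; omega) fun p hp hp' => ?_
        rw [h_neg p (by simp only [mem_Ico] at hp hp'; omega), zero_mul]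
    _ = ∑ m ∈ Icc (s : ℤ) N, if m = N + s - k then G m else 0 := by
        simp only [h, sum_mul, mul_assoc]
        rw [sum_comm]
        refine sum_congr rfl fun m hm => ?_
        rw [mem_Icc] at hm
        rw [← mul_sum, hG.sum_Ico_star_mul (by omega) (by omega), mul_ite, mul_one, mul_zero]
        exact if_congr (by omega) rfl rfl
    _ = coeffRow N G s k := by
        rw [sum_ite_eq', coeffRow, ite_eq_left_iff]
        intro hmem
        rw [hG.eq_zero_of_gt _ (by simp only [mem_Icc] at hmem; omega)]

theorem vecMul_tailRow_one_pow (hG : IsQMF N G) {t : ℕ} (ht : t ≤ N) :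
    vecMul (tailRow N G 1) ((circBlockT N G * circBlockU N G) ^ t) = tailRow N G (t + 1) := by
  induction t with
  | zero => rw [pow_zero, vecMul_one]
  | succ t ih =>
    rw [pow_succ, ← vecMul_vecMul, ih (by omega), ← vecMul_vecMul,
      vecMul_tailRow_circBlockT hG (by omega), vecMul_coeffRow_circBlockU hG]

theorem tailRow_succ_self : tailRow N G (N + 1) = 0 := by
  funext q
  rw [tailRow, Icc_eq_empty (by push_cast; omega), sum_empty, Pi.zero_apply]

end CirculantBlocks

open Polynomial in
theorem eq_zero_of_sum_zpow_mul_eq_zero {S : Finset ℤ} {c : ℤ → ℂ}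
    (h : ∀ ξ : ℂ, ‖ξ‖ = 1 → ∑ e ∈ S, ξ ^ e * c e = 0) {d : ℤ} (hd : d ∈ S) : c d = 0 := by
  obtain ⟨K, hK⟩ : ∃ K : ℕ, ∀ e ∈ S, -(K : ℤ) ≤ e := by
    obtain ⟨b, hb⟩ := S.bddBelow
    exact ⟨(-b).toNat, fun e he => by have := hb he; omega⟩
  -- `ξ ^ K` times the Laurent sum is a polynomial vanishing on the infinite unit circle.
  let p : ℂ[X] := ∑ e ∈ S, C (c e) * X ^ (e + K).toNat
  have hcircle : {ξ : ℂ | ‖ξ‖ = 1}.Infinite := by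
    have hconn := isConnected_sphere (E := ℂ) (by rw [Complex.rank_real_complex]; norm_num) 0
      zero_le_one
    convert hconn.isPreconnected.infinite_of_nontrivial ⟨1, by simp, -1, by simp, by norm_num⟩
    ext; simp
  have hp : p = 0 := by
    refine eq_zero_of_infinite_isRoot p (hcircle.mono fun ξ hξ => ?_)
    have hξ0 : ξ ≠ 0 := by rintro rfl; simp at hξ
    calc p.eval ξ = ξ ^ (K : ℤ) * ∑ e ∈ S, ξ ^ e * c e := by
          simp only [p, eval_finsetSum, eval_mul, eval_C, eval_pow, eval_X, mul_sum]
          refine sum_congr rfl fun e he => ?_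
          rw [← zpow_natCast, Int.toNat_of_nonneg (by have := hK e he; omega), zpow_add₀ hξ0]
          ring
      _ = 0 := by rw [h ξ hξ, mul_zero]
  have hcoeff := congrArg (coeff · (d + K).toNat) hp
  simp only [p, finsetSum_coeff, coeff_C_mul, coeff_X_pow, coeff_zero] at hcoeff
  rwa [sum_eq_single d (fun e he hne => by
      rw [if_neg (by have := hK e he; have := hK d hd; omega), mul_zero])
    (fun h => absurd hd h), if_pos rfl, mul_one] at hcoeff

theorem conjTranspose_zpow_smul {m n : Type*} {ξ : ℂ} (hξ : ‖ξ‖ = 1) (i : ℤ)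
    (P : Matrix m n ℂ) : (ξ ^ i • P)ᴴ = ξ ^ (-i) • Pᴴ := by
  rw [conjTranspose_smul, star_zpow₀, Complex.star_def, ← Complex.inv_eq_conj hξ, _root_.inv_zpow']

open scoped Pointwise in
theorem sum_eq_sum_add_of_sub_subset {M : Type*} [AddCommMonoid M] {S D : Finset ℤ}
    (hSD : S - S ⊆ D) {f : ℤ → M} (hf : ∀ j ∉ S, f j = 0) {i : ℤ} (hi : i ∈ S) :
    ∑ j ∈ S, f j = ∑ e ∈ D, f (i + e) := by
  have hshift : ∀ e ∉ D, f (i + e) = 0 := fun e he => by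
    by_contra hne
    exact he (hSD (by simpa using sub_mem_sub (of_not_not (mt (hf _) hne)) hi))
  rw [← finsum_eq_sum_of_support_subset f (Function.support_subset_iff'.2 hf),
    ← finsum_eq_sum_of_support_subset _ (Function.support_subset_iff'.2 hshift)]
  exact (finsum_comp_equiv (Equiv.addLeft i)).symm

section CircleCoefficients

variable {n : Type*} [Fintype n] [DecidableEq n]

theorem sum_zpow_smul_conjTranspose_mul {ξ : ℂ} (hξ : ‖ξ‖ = 1) (S : Finset ℤ)
    (P Q : ℤ → Matrix n n ℂ) :
    (∑ i ∈ S, ξ ^ i • P i)ᴴ * ∑ j ∈ S, ξ ^ j • Q j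
      = ∑ i ∈ S, ∑ j ∈ S, ξ ^ (j - i) • ((P i)ᴴ * Q j) := by
  have hξ0 : ξ ≠ 0 := by rintro rfl; simp at hξ
  simp only [conjTranspose_sum, conjTranspose_zpow_smul hξ, sum_mul_sum, smul_mul_smul,
    ← zpow_add₀ hξ0, neg_add_eq_sub]

theorem sum_zpow_smul_mul_conjTranspose {ξ : ℂ} (hξ : ‖ξ‖ = 1) (S : Finset ℤ)
    (P Q : ℤ → Matrix n n ℂ) :
    (∑ i ∈ S, ξ ^ i • P i) * (∑ j ∈ S, ξ ^ j • Q j)ᴴ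
      = ∑ i ∈ S, ∑ j ∈ S, ξ ^ (i - j) • (P i * (Q j)ᴴ) := by
  have hξ0 : ξ ≠ 0 := by rintro rfl; simp at hξ
  simp only [conjTranspose_sum, conjTranspose_zpow_smul hξ, sum_mul_sum, smul_mul_smul,
    ← zpow_add₀ hξ0, ← sub_eq_add_neg]

open scoped Pointwise in
theorem finsum_mul_add_eq_of_forall_norm_eq_one {X Y : ℤ → Matrix n n ℂ} {S : Finset ℤ}
    (hS : S.Nonempty) (hX : ∀ i ∉ S, X i = 0) (hY : ∀ j ∉ S, Y j = 0)
    (h : ∀ ξ : ℂ, ‖ξ‖ = 1 → ∑ i ∈ S, ∑ j ∈ S, ξ ^ (j - i) • (X i * Y j) = 1) (d : ℤ) :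
    ∑ᶠ i, X i * Y (i + d) = if d = 0 then 1 else 0 := by
  let c : ℤ → Matrix n n ℂ := fun e => (∑ᶠ i, X i * Y (i + e)) - if e = 0 then 1 else 0
  let D := insert d (S - S)
  have h0 : (0 : ℤ) ∈ D := by
    obtain ⟨i, hi⟩ := hS
    exact mem_insert_of_mem (by simpa using sub_mem_sub hi hi)
  have hc : ∀ ξ : ℂ, ‖ξ‖ = 1 → ∑ e ∈ D, ξ ^ e • c e = 0 := fun ξ hξ => by
    have hcorr : ∀ e, ∑ᶠ i, X i * Y (i + e) = ∑ i ∈ S, X i * Y (i + e) := fun e =>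
      finsum_eq_sum_of_support_subset _
        (Function.support_subset_iff'.2 fun i hi => by rw [hX i hi, zero_mul])
    simp only [c, smul_sub, sum_sub_distrib, smul_ite, smul_zero, sum_ite_eq', if_pos h0,
      zpow_zero, one_smul, hcorr, smul_sum, sub_eq_zero]
    rw [sum_comm, ← h ξ hξ]
    refine sum_congr rfl fun i hi => ?_
    rw [sum_eq_sum_add_of_sub_subset (subset_insert d (S - S))
      (f := fun j => ξ ^ (j - i) • (X i * Y j)) (fun j hj => by rw [hY j hj, mul_zero, smul_zero])
      hi]
    simp only [add_sub_cancel_left, D]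
  suffices c d = 0 from sub_eq_zero.1 this
  ext r s
  rw [Matrix.zero_apply]
  refine eq_zero_of_sum_zpow_mul_eq_zero (c := fun e => c e r s) (fun ξ hξ => ?_)
    (mem_insert_self d (S - S))
  have := congrFun (congrFun (hc ξ hξ) r) s
  simp only [Matrix.sum_apply, Matrix.smul_apply, smul_eq_mul, Matrix.zero_apply] at this
  exact this

end CircleCoefficients

def zeroExtend {A : Type*} [Zero A] (N : ℕ) (F : ℕ → A) (k : ℤ) : A :=
  if 0 ≤ k ∧ k ≤ N then F k.toNat else 0

section ZeroExtend

variable {A : Type*} [Zero A] {N : ℕ} {F : ℕ → A}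

theorem zeroExtend_natCast {k : ℕ} (hk : k ≤ N) : zeroExtend N F k = F k := by
  rw [zeroExtend, if_pos ⟨by omega, by omega⟩, Int.toNat_natCast]

theorem zeroExtend_of_neg {k : ℤ} (hk : k < 0) : zeroExtend N F k = 0 := by
  rw [zeroExtend, if_neg (by omega)]

theorem zeroExtend_of_gt {k : ℤ} (hk : (N : ℤ) < k) : zeroExtend N F k = 0 := by
  rw [zeroExtend, if_neg (by omega)]

end ZeroExtend

section Folding

variable {A : Type*} [AddMonoid A] {N : ℕ} {F : ℕ → A}

theorem zeroExtend_add_zeroExtend_eq_mod_succ {p k : ℕ} (hp : p ≤ N) (hk : k ≤ N) :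
    zeroExtend N F (p - k) + zeroExtend N F (p - k + (N + 1))
      = F ((p + (N + 1) - k) % (N + 1)) := by
  rcases le_or_gt k p with hkp | hpk
  · rw [show p + (N + 1) - k = p - k + (N + 1) by omega, Nat.add_mod_right,
      Nat.mod_eq_of_lt (by omega), zeroExtend_of_gt (k := p - k + (N + 1)) (by omega), add_zero,
      ← Nat.cast_sub hkp, zeroExtend_natCast (by omega)]
  · rw [Nat.mod_eq_of_lt (by omega), zeroExtend_of_neg (by omega), zero_add,
      show (p : ℤ) - k + (N + 1) = ((p + (N + 1) - k : ℕ) : ℤ) by omega,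
      zeroExtend_natCast (by omega)]

theorem zeroExtend_add_zeroExtend_eq_mod {q k : ℕ} (hq : q < N) (hk : k < N) :
    zeroExtend N F (q - k) + zeroExtend N F (q - k + N)
      = if (q + N - k) % N = 0 then F 0 + F N else F ((q + N - k) % N) := by
  rcases lt_trichotomy k q with hkq | rfl | hqk
  · rw [show q + N - k = q - k + N by omega, Nat.add_mod_right, Nat.mod_eq_of_lt (by omega),
      if_neg (by omega), zeroExtend_of_gt (k := q - k + N) (by omega), add_zero,
      ← Nat.cast_sub hkq.le, zeroExtend_natCast (by omega)]
  · rw [Nat.add_sub_cancel_left, Nat.mod_self, if_pos rfl, sub_self, zero_add,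
      ← Nat.cast_zero, zeroExtend_natCast (Nat.zero_le _), zeroExtend_natCast le_rfl]
  · rw [Nat.mod_eq_of_lt (by omega), if_neg (by omega), zeroExtend_of_neg (by omega), zero_add,
      show (q : ℤ) - k + N = ((q + N - k : ℕ) : ℤ) by omega, zeroExtend_natCast (by omega)]

end Folding

def blockRow {n ι α : Type*} (v : ι → Matrix n n α) : Matrix n (ι × n) α :=
  of fun r q => v q.1 r q.2

theorem blockRow_mul_comp {n ι α : Type*} [Fintype n] [Fintype ι] [NonUnitalNonAssocSemiring α]
    (v : ι → Matrix n n α) (X : Matrix ι ι (Matrix n n α)) :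
    blockRow v * comp ι ι n n α X = blockRow (vecMul v X) := by
  ext r ⟨q, s⟩
  simp only [blockRow, mul_apply, of_apply, comp_apply, Fintype.sum_prod_type, vecMul,
    dotProduct, Matrix.sum_apply]

section ABCD

variable {M N : ℕ} {F : ℕ → Matrix (Fin (2*M)) (Fin (2*M)) ℂ}

theorem Fpoly_eq_sum_zeroExtend (ξ : ℂ) :
    Fpoly M N F ξ = ∑ j ∈ Ico (0 : ℤ) (N + 1), ξ ^ j • zeroExtend N F j := by
  rw [Fpoly, ← Nat.cast_succ, ← sum_range_eq_sum_Ico_int (fun j => ξ ^ j • zeroExtend N F j)]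
  exact sum_congr rfl fun j hj => by
    rw [zpow_natCast, zeroExtend_natCast (Nat.lt_succ_iff.1 (mem_range.1 hj))]

theorem isQMF_zeroExtend
    (hQMF : ∀ ξ : ℂ, ‖ξ‖ = 1 →
      (1 : Matrix (Fin (2*M)) (Fin (2*M)) ℂ) - (Fpoly M N F ξ)ᴴ * Fpoly M N F ξ = 0) :
    IsQMF N (zeroExtend N F) := by
  have hS : (Ico (0 : ℤ) (N + 1)).Nonempty := ⟨0, by simp⟩
  have hZ : ∀ k ∉ Ico (0 : ℤ) (N + 1), zeroExtend N F k = 0 := fun k hk => by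
    rw [mem_Ico, not_and_or, not_le, not_lt] at hk
    rcases hk with hk | hk
    · exact zeroExtend_of_neg hk
    · exact zeroExtend_of_gt (by omega)
  have hZ' : ∀ k ∉ Ico (0 : ℤ) (N + 1), (zeroExtend N F k)ᴴ = 0 := fun k hk => by
    rw [hZ k hk, conjTranspose_zero]
  have hunit : ∀ ξ : ℂ, ‖ξ‖ = 1 → (Fpoly M N F ξ)ᴴ * Fpoly M N F ξ = 1 := fun ξ hξ =>
    (sub_eq_zero.1 (hQMF ξ hξ)).symm
  refine ⟨fun k => zeroExtend_of_neg, fun k => zeroExtend_of_gt, fun d => ?_, fun d => ?_⟩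
  · refine finsum_mul_add_eq_of_forall_norm_eq_one hS hZ' hZ (fun ξ hξ => ?_) d
    rw [← sum_zpow_smul_conjTranspose_mul hξ, ← Fpoly_eq_sum_zeroExtend, hunit ξ hξ]
  · refine finsum_mul_add_eq_of_forall_norm_eq_one hS hZ hZ' (fun ξ hξ => ?_) d
    have hξ' : ‖ξ⁻¹‖ = 1 := by rw [norm_inv, hξ, inv_one]
    rw [← mul_eq_one_comm.1 (hunit ξ⁻¹ hξ'), Fpoly_eq_sum_zeroExtend,
      sum_zpow_smul_mul_conjTranspose hξ']
    simp only [_root_.inv_zpow', neg_sub]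

theorem Tcirc_apply_succ (i : Fin (N + 1)) (k : Fin N) (r w : Fin (2*M)) :
    Tcirc M N F (i, r) (k.succ, w)
      = (zeroExtend N F (i - (k + 1)) + zeroExtend N F (i - (k + 1) + (N + 1))) r w := by
  have hfold := zeroExtend_add_zeroExtend_eq_mod_succ (F := F) (Nat.lt_succ_iff.1 i.isLt)
    (Nat.succ_le_of_lt k.isLt)
  push_cast at hfold
  simp only [Tcirc, Fin.val_succ, ← hfold]

theorem Ediag_succ_succ (k q : Fin N) (w s : Fin (2*M)) :
    Ediag M N F (k.succ, w) (q.succ, s) = circBlockU N (zeroExtend N F) k q w s := by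
  have hfold := congrArg conjTranspose (zeroExtend_add_zeroExtend_eq_mod (F := F) q.isLt k.isLt)
  rw [apply_ite conjTranspose] at hfold
  simp only [Ediag, Fin.val_succ, Nat.succ_ne_zero, if_false,
    show q.1 + 1 + N - (k.1 + 1) = q.1 + N - k.1 by omega, ← hfold, circBlockU, of_apply,
    star_eq_conjTranspose]

theorem ABCDmat_apply_succ (i : Fin (N + 1)) (r : Fin (2*M)) (q : Fin N) (s : Fin (2*M)) :
    ABCDmat M N F (i, r) (q.succ, s)
      = (∑ k : Fin N, (zeroExtend N F (i - (k + 1)) + zeroExtend N F (i - (k + 1) + (N + 1)))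
          * circBlockU N (zeroExtend N F) k q) r s := by
  have hzero : ∀ w, Ediag M N F (0, w) (q.succ, s) = 0 := fun w => by simp [Ediag]
  rw [ABCDmat, mul_apply, Fintype.sum_prod_type, Fin.sum_univ_succ]
  simp only [hzero, mul_zero, sum_const_zero, zero_add, Tcirc_apply_succ, Ediag_succ_succ,
    Matrix.sum_apply, mul_apply]

theorem Bmat_eq_blockRow :
    Bmat M N F
      = blockRow (vecMul (coeffRow N (zeroExtend N F) 0) (circBlockU N (zeroExtend N F))) := by
  ext r ⟨q, s⟩
  simp only [Bmat, ABCDmat_apply_succ, blockRow, of_apply, vecMul, dotProduct, coeffRow]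
  refine congrFun (congrFun (sum_congr rfl fun k _ => ?_) r) s
  rw [Fin.val_zero, Nat.cast_zero, zeroExtend_of_neg (by omega), zero_add]
  congr 2
  ring

theorem Dmat_eq_comp :
    Dmat M N F
      = comp _ _ _ _ _ (circBlockT N (zeroExtend N F) * circBlockU N (zeroExtend N F)) := by
  ext ⟨p, r⟩ ⟨q, s⟩
  simp only [Dmat, ABCDmat_apply_succ, comp_apply, mul_apply, circBlockT, of_apply, Fin.val_succ]
  refine congrFun (congrFun (sum_congr rfl fun k _ => ?_) r) s
  push_cast
  congr 3 <;> ring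

end ABCD

theorem stmt6 (M N : ℕ) (F : ℕ → Matrix (Fin (2*M)) (Fin (2*M)) ℂ)
    (hQMF : ∀ ξ : ℂ, ‖ξ‖ = 1 →
      (1 : Matrix (Fin (2*M)) (Fin (2*M)) ℂ) - (Fpoly M N F ξ)ᴴ * Fpoly M N F ξ = 0) :
    Bmat M N F * (Dmat M N F)^N = 0 := by
  have hG := isQMF_zeroExtend hQMF
  rw [Bmat_eq_blockRow, Dmat_eq_comp, ← compRingEquiv_apply, ← map_pow, compRingEquiv_apply,
    blockRow_mul_comp, vecMul_coeffRow_circBlockU hG, zero_add, vecMul_tailRow_one_pow hG le_rfl,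
    tailRow_succ_self]
  rfl
end

section
/- Suppose A, B, C, D ∈ ℂ^{n×n} satisfy: (A B; C D) is unitary, DC = 0, BC = C, B = CU, D = AU with U = A* + C*. Then U is unitary, B is an orthogonal projection (B² = B, B* = B), and D = I − B. -/
/-!
Conjugating `AᴴA + CᴴC = 1` by `U` gives `UᴴU = (CU)ᴴ(CU) + (AU)ᴴ(AU) = BᴴB + DᴴD = 1`,
so `U` is unitary, and then `B + D = (C + A)U = UᴴU = 1`. From `BC = C` and `B = CU`, `B` is
idempotent. An idempotent `P` with `PᴴP + (1 - P)ᴴ(1 - P) = 1` satisfies `2PᴴP = P + Pᴴ`;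
multiplying on the right by `P` gives `PᴴP = P`, hence `P` is self-adjoint.
-/

open Matrix

section StarRing

variable {R : Type*} [Ring R] [StarRing R]

theorem star_mul_self_eq_of_star_mul_self_add_eq_one {a c : R} (h : star a * a + star c * c = 1)
    (u : R) : star (c * u) * (c * u) + star (a * u) * (a * u) = star u * u := by
  calc star (c * u) * (c * u) + star (a * u) * (a * u)
      = star u * (star a * a + star c * c) * u := by
        simp only [star_mul, mul_add, add_mul, mul_assoc, add_comm]
    _ = star u * u := by rw [h, mul_one]

theorem isSelfAdjoint_of_isIdempotentElem_of_star_mul_self_add_eq_one {p : R}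
    (hp : IsIdempotentElem p) (h : star p * p + star (1 - p) * (1 - p) = 1) :
    IsSelfAdjoint p := by
  have htwice : star p * p + star p * p = p + star p := by
    simp only [star_sub, star_one, sub_mul, mul_sub, one_mul, mul_one] at h
    rw [← sub_eq_zero, ← sub_eq_zero.mpr h]
    abel
  have hfix : star p * p = p := by
    have hright := congrArg (· * p) htwice
    simp only [add_mul, mul_assoc, hp.eq] at hright
    exact add_left_cancel (hright.trans (add_comm _ _))
  calc star p = star (star p * p) := by rw [hfix]
    _ = p := by rw [star_mul, star_star, hfix]

end StarRing

theorem Matrix.conjTranspose_mul_self_add_eq_one_of_fromBlocks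
    {m n p q α : Type*} [Fintype m] [Fintype n] [DecidableEq p] [DecidableEq q]
    [Semiring α] [StarRing α]
    {A : Matrix m p α} {B : Matrix m q α} {C : Matrix n p α} {D : Matrix n q α}
    (h : (fromBlocks A B C D)ᴴ * fromBlocks A B C D = 1) :
    Aᴴ * A + Cᴴ * C = 1 ∧ Bᴴ * B + Dᴴ * D = 1 := by
  rw [fromBlocks_conjTranspose, fromBlocks_multiply, ← fromBlocks_one] at h
  obtain ⟨hA, -, -, hB⟩ := fromBlocks_inj.mp h
  exact ⟨hA, hB⟩

theorem stmt9_general (n : ℕ) (A B C D U : Matrix (Fin n) (Fin n) ℂ)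
    (hU : U = Aᴴ + Cᴴ)
    (h1 : (fromBlocks A B C D)ᴴ * fromBlocks A B C D = 1)
    (h4 : B * C = C) (h5 : B = C * U) (h6 : D = A * U) :
    (Uᴴ * U = 1 ∧ U * Uᴴ = 1) ∧ (B * B = B ∧ Bᴴ = B) ∧ D = 1 - B := by
  obtain ⟨hAC, hBD⟩ := conjTranspose_mul_self_add_eq_one_of_fromBlocks h1
  have hUU : Uᴴ * U = 1 := by
    have hconj := star_mul_self_eq_of_star_mul_self_add_eq_one hAC U
    rw [← h5, ← h6] at hconj
    exact hconj.symm.trans hBD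
  have hsum : B + D = 1 := by
    rw [h5, h6, ← add_mul, ← hUU, hU, conjTranspose_add, conjTranspose_conjTranspose,
      conjTranspose_conjTranspose, add_comm C]
  have hD : D = 1 - B := eq_sub_of_add_eq' hsum
  have hB : IsIdempotentElem B := show B * B = B by
    calc B * B = B * C * U := by rw [mul_assoc, ← h5]
      _ = B := by rw [h4, ← h5]
  have hBsa : Bᴴ = B :=
    isSelfAdjoint_of_isIdempotentElem_of_star_mul_self_add_eq_one hB (hD ▸ hBD)
  exact ⟨⟨hUU, mul_eq_one_comm.mp hUU⟩, ⟨hB.eq, hBsa⟩, hD⟩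

theorem stmt9 (n : ℕ) (A B C D U : Matrix (Fin n) (Fin n) ℂ)
    (hU : U = Aᴴ + Cᴴ)
    (h1 : (fromBlocks A B C D)ᴴ * fromBlocks A B C D = 1)
    (h2 : fromBlocks A B C D * (fromBlocks A B C D)ᴴ = 1)
    (h3 : D * C = 0) (h4 : B * C = C) (h5 : B = C * U) (h6 : D = A * U) :
    (Uᴴ * U = 1 ∧ U * Uᴴ = 1) ∧ (B * B = B ∧ Bᴴ = B) ∧ D = 1 - B :=
  stmt9_general n A B C D U hU h1 h4 h5 h6
end
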